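/- Let X_t be an irreducible continuous-time Markov chain on a finite set V with stationary measure π, and let Y_t be its trace on a nonempty subset W with jump rates R_W(x,y) = λ(x) P_x[H_y = H^+_W]. Then the measure π conditioned to W, π_W(x) = π(x)/π(W), is the stationary state of the trace process Y_t. Moreover, if X is reversible with respect to π, then Y is reversible with respect to π_W. -/

import Mathlib

/-!
The trace rates are values of the generator on the harmonic measure `hm(·, y)` of `W`: for
`x ≠ y` in `W`, `L hm(·, y)(x) = R_W(x, y)`, and since `∑_{y ∈ W} hm(·, y) ≡ 1` (maximum principle,
using irreducibility) also `L hm(·, y)(y) = -∑_{x ≠ y} R_W(y, x)`. Stationarity of `π` means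
`∑ π L f = 0`; for `f = hm(·, y)`, harmonic off `W`, only the terms on `W` survive, which is the
stationarity of `π_W` for `R_W`. Under reversibility `L` is self-adjoint in `L²(π)`, and pairing
`hm(·, x)` with `L hm(·, y)` gives `π(x) R_W(x, y) = π(y) R_W(y, x)`.
-/

open Finset Filter Topology

noncomputable section

/-- Generator of a continuous-time Markov chain with jump rates `R`. -/
def gen {V : Type*} [Fintype V] (R : V → V → ℝ) (f : V → ℝ) (x : V) : ℝ :=
  ∑ y, R x y * (f y - f x)

/-- Generator of a chain restricted to the subset `W` (e.g. a trace process). -/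
def genOn {V : Type*} [Fintype V] [DecidableEq V] (W : Finset V) (R : V → V → ℝ)
    (f : V → ℝ) (x : V) : ℝ :=
  ∑ y ∈ W, R x y * (f y - f x)

/-- Detailed balance (reversibility) of `π` for the rates `R`. -/
def Reversible {V : Type*} (R : V → V → ℝ) (π : V → ℝ) : Prop :=
  ∀ x y, π x * R x y = π y * R y x

/-- Stationarity of `π` for the rates `R`. -/
def Stationary {V : Type*} [Fintype V] (R : V → V → ℝ) (π : V → ℝ) : Prop :=
  ∀ y, ∑ x, π x * R x y = π y * ∑ z, R y z

/-- Irreducibility of the rates `R`. -/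
def Irred {V : Type*} (R : V → V → ℝ) : Prop :=
  ∀ x y : V, Relation.ReflTransGen (fun a b => 0 < R a b) x y

/-- `h` is the equilibrium potential `h(x) = P_x[H_A < H_B]` : it equals `1` on `A`,
`0` on `B` and is harmonic elsewhere. -/
def IsEqPotential {V : Type*} [Fintype V] (R : V → V → ℝ) (A B : Finset V)
    (h : V → ℝ) : Prop :=
  (∀ x ∈ A, h x = 1) ∧ (∀ x ∈ B, h x = 0) ∧ ∀ x, x ∉ A → x ∉ B → gen R h x = 0

/-- The capacity `Cap(A,B) = ∑_{x∈A} π(x) λ(x) P_x[H_B < H_A⁺]`, expressed through the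
equilibrium potential `h = h_{A,B}` as `-∑_{x∈A} π(x) (L h)(x)`. -/
def capFor {V : Type*} [Fintype V] (R : V → V → ℝ) (π : V → ℝ) (A : Finset V)
    (h : V → ℝ) : ℝ :=
  ∑ x ∈ A, π x * (-(gen R h x))

section Generator

variable {V : Type*} [Fintype V]

lemma gen_sub (R : V → V → ℝ) (f g : V → ℝ) (x : V) :
    gen R (f - g) x = gen R f x - gen R g x := by
  simp only [gen, Pi.sub_apply, ← sum_sub_distrib]
  exact sum_congr rfl fun y _ => by ring

lemma gen_const (R : V → V → ℝ) (c : ℝ) (x : V) : gen R (fun _ => c) x = 0 := by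
  simp [gen]

lemma gen_finset_sum (R : V → V → ℝ) {ι : Type*} (s : Finset ι) (F : ι → V → ℝ) (x : V) :
    gen R (fun z => ∑ i ∈ s, F i z) x = ∑ i ∈ s, gen R (F i) x := by
  simp only [gen, ← sum_sub_distrib, mul_sum]
  exact sum_comm

variable {R : V → V → ℝ} {π : V → ℝ}

lemma apply_eq_of_gen_eq_zero_of_forall_le (hR : ∀ x y, 0 ≤ R x y) {d : V → ℝ} {a c : V}
    (hmax : ∀ z, d z ≤ d a) (hgen : gen R d a = 0) (hac : 0 < R a c) : d c = d a := by
  have hnonpos : ∀ w ∈ univ, R a w * (d w - d a) ≤ 0 := fun w _ =>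
    mul_nonpos_of_nonneg_of_nonpos (hR a w) (sub_nonpos.2 (hmax w))
  rcases mul_eq_zero.1 ((sum_eq_zero_iff_of_nonpos hnonpos).1 hgen c (mem_univ c)) with h | h
  · exact absurd h hac.ne'
  · linarith

theorem le_zero_of_gen_eq_zero_off (hR : ∀ x y, 0 ≤ R x y) (hirr : Irred R) {W : Finset V}
    (hW : W.Nonempty) {d : V → ℝ} (hdW : ∀ x ∈ W, d x ≤ 0) (hd : ∀ x ∉ W, gen R d x = 0)
    (z : V) : d z ≤ 0 := by
  obtain ⟨w, hw⟩ := hW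
  obtain ⟨a, -, ha⟩ := exists_max_image univ d ⟨w, mem_univ w⟩
  have hmax : ∀ z, d z ≤ d a := fun z => ha z (mem_univ z)
  -- The maximum propagates along a path of positive rates from `a` until it enters `W`.
  suffices ∀ b, Relation.ReflTransGen (fun a b => 0 < R a b) b w → d b = d a → d a ≤ 0 from
    (hmax z).trans (this a (hirr a w) rfl)
  intro b hbw
  induction hbw using Relation.ReflTransGen.head_induction_on with
  | refl => exact fun h => h ▸ hdW w hw
  | @head b c hbc _ ih =>
    intro hb
    by_cases hbW : b ∈ W
    · exact hb ▸ hdW b hbW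
    · exact ih ((apply_eq_of_gen_eq_zero_of_forall_le hR (hb ▸ hmax) (hd b hbW) hbc).trans hb)

theorem eq_of_gen_eq_zero_off (hR : ∀ x y, 0 ≤ R x y) (hirr : Irred R) {W : Finset V}
    (hW : W.Nonempty) {f g : V → ℝ} (hfg : ∀ x ∈ W, f x = g x)
    (hf : ∀ x ∉ W, gen R f x = 0) (hg : ∀ x ∉ W, gen R g x = 0) : f = g := by
  funext z
  have h₁ := le_zero_of_gen_eq_zero_off hR hirr hW (d := f - g)
    (fun x hx => by simp [hfg x hx]) (fun x hx => by rw [gen_sub, hf x hx, hg x hx, sub_zero]) z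
  have h₂ := le_zero_of_gen_eq_zero_off hR hirr hW (d := g - f)
    (fun x hx => by simp [hfg x hx]) (fun x hx => by rw [gen_sub, hf x hx, hg x hx, sub_zero]) z
  simp only [Pi.sub_apply] at h₁ h₂
  linarith

lemma Stationary.sum_mul_gen_eq_zero (hstat : Stationary R π) (f : V → ℝ) :
    ∑ z, π z * gen R f z = 0 := by
  have h : ∀ z, π z * gen R f z = ∑ w, π z * R z w * f w - π z * (∑ w, R z w) * f z := by
    intro z
    simp only [gen, mul_sum, sum_mul, ← sum_sub_distrib]
    exact sum_congr rfl fun w _ => by ring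
  rw [sum_congr rfl fun z _ => h z, sum_sub_distrib, sum_comm, sub_eq_zero]
  exact sum_congr rfl fun w _ => by rw [← sum_mul, hstat w]

lemma Reversible.sum_mul_mul_gen_comm (hrev : Reversible R π) (f g : V → ℝ) :
    ∑ z, π z * (f z * gen R g z) = ∑ z, π z * (g z * gen R f z) := by
  have h : ∀ u v : V → ℝ, ∑ z, π z * (u z * gen R v z)
      = ∑ z, ∑ w, π z * R z w * u z * v w - ∑ z, ∑ w, π z * R z w * u z * v z := by
    intro u v
    rw [← sum_sub_distrib]
    refine sum_congr rfl fun z _ => ?_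
    simp only [gen, mul_sum, ← sum_sub_distrib]
    exact sum_congr rfl fun w _ => by ring
  have hcross : ∑ z, ∑ w, π z * R z w * f z * g w = ∑ z, ∑ w, π z * R z w * g z * f w := by
    rw [sum_comm]
    refine sum_congr rfl fun w _ => sum_congr rfl fun z _ => ?_
    rw [hrev z w]
    ring
  rw [h, h, hcross]
  congr 1
  exact sum_congr rfl fun z _ => sum_congr rfl fun w _ => by ring

end Generator

section Trace

variable {V : Type*} [Fintype V] [DecidableEq V] {R : V → V → ℝ} {π : V → ℝ}
  {W : Finset V} {hm : V → V → ℝ}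

/-- With `hm z y` the harmonic measure `P_z[X_{H_W} = y]`, this is `λ(x) P_x[H_y = H_W⁺]`. -/
def traceRate (R : V → V → ℝ) (W : Finset V) (hm : V → V → ℝ) (x y : V) : ℝ :=
  R x y + ∑ z ∈ Wᶜ, R x z * hm z y

theorem sum_harmonicMeasure_eq_one (hR : ∀ x y, 0 ≤ R x y) (hirr : Irred R)
    (hW : W.Nonempty) (hm0 : ∀ x ∈ W, ∀ y, hm x y = if x = y then 1 else 0)
    (hmh : ∀ x ∉ W, ∀ y, gen R (fun z => hm z y) x = 0) (z : V) :
    ∑ y ∈ W, hm z y = 1 :=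
  congrFun (eq_of_gen_eq_zero_off hR hirr hW (f := fun z => ∑ y ∈ W, hm z y) (g := fun _ => 1)
    (fun x hx => by simp [hm0 x hx, hx])
    (fun x hx => by rw [gen_finset_sum]; exact sum_eq_zero fun y _ => hmh x hx y)
    (fun x _ => gen_const R 1 x)) z

lemma gen_harmonicMeasure_of_ne (hm0 : ∀ x ∈ W, ∀ y, hm x y = if x = y then 1 else 0)
    {x y : V} (hx : x ∈ W) (hy : y ∈ W) (hxy : x ≠ y) :
    gen R (fun z => hm z y) x = traceRate R W hm x y := by
  have hxy0 : hm x y = 0 := by rw [hm0 x hx, if_neg hxy]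
  have hdirect : ∑ z ∈ W, R x z * hm z y = R x y := by
    rw [sum_congr rfl fun z hz => by rw [hm0 z hz, mul_ite, mul_one, mul_zero],
      sum_ite_eq' W y, if_pos hy]
  simp only [gen, hxy0, sub_zero, traceRate]
  rw [← sum_add_sum_compl W, hdirect]

lemma gen_harmonicMeasure_self (hm0 : ∀ x ∈ W, ∀ y, hm x y = if x = y then 1 else 0)
    (hsum : ∀ z, ∑ x ∈ W, hm z x = 1) {y : V} (hy : y ∈ W) :
    gen R (fun z => hm z y) y = -∑ x ∈ W.erase y, traceRate R W hm y x := by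
  have h : ∑ x ∈ W, gen R (fun z => hm z x) y = 0 := by
    rw [← gen_finset_sum, show (fun z => ∑ x ∈ W, hm z x) = fun _ => 1 from funext hsum]
    exact gen_const R 1 y
  rw [← add_sum_erase W _ hy] at h
  rw [eq_neg_iff_add_eq_zero, ← h]
  congr 1
  exact (sum_congr rfl fun x hx =>
    gen_harmonicMeasure_of_ne hm0 hy (mem_of_mem_erase hx) (ne_of_mem_erase hx).symm).symm

lemma Stationary.sum_erase_mul_traceRate (hstat : Stationary R π)
    (hm0 : ∀ x ∈ W, ∀ y, hm x y = if x = y then 1 else 0)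
    (hmh : ∀ x ∉ W, ∀ y, gen R (fun z => hm z y) x = 0)
    (hsum : ∀ z, ∑ x ∈ W, hm z x = 1) {y : V} (hy : y ∈ W) :
    ∑ x ∈ W.erase y, π x * traceRate R W hm x y
      = π y * ∑ x ∈ W.erase y, traceRate R W hm y x := by
  have h := hstat.sum_mul_gen_eq_zero (fun z => hm z y)
  rw [← sum_add_sum_compl W, sum_eq_zero (s := Wᶜ) fun x hx => by
      rw [hmh x (mem_compl.1 hx), mul_zero],
    add_zero, ← add_sum_erase W _ hy, gen_harmonicMeasure_self hm0 hsum hy] at h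
  rw [sum_congr rfl fun x hx => by
    rw [← gen_harmonicMeasure_of_ne hm0 (mem_of_mem_erase hx) hy (ne_of_mem_erase hx)]]
  linarith

lemma sum_harmonicMeasure_mul (hm0 : ∀ x ∈ W, ∀ y, hm x y = if x = y then 1 else 0)
    {a : V} (ha : a ∈ W) {F : V → ℝ} (hF : ∀ z ∉ W, F z = 0) :
    ∑ z, hm z a * F z = F a := by
  rw [← sum_add_sum_compl W, sum_eq_zero (s := Wᶜ) fun z hz => by rw [hF z (mem_compl.1 hz),
    mul_zero], add_zero, sum_congr rfl fun z hz => by rw [hm0 z hz, ite_mul, one_mul, zero_mul],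
    sum_ite_eq' W a, if_pos ha]

lemma Reversible.mul_traceRate_comm (hrev : Reversible R π)
    (hm0 : ∀ x ∈ W, ∀ y, hm x y = if x = y then 1 else 0)
    (hmh : ∀ x ∉ W, ∀ y, gen R (fun z => hm z y) x = 0) {x y : V} (hx : x ∈ W) (hy : y ∈ W) :
    π x * traceRate R W hm x y = π y * traceRate R W hm y x := by
  obtain rfl | hxy := eq_or_ne x y
  · rfl
  have h := hrev.sum_mul_mul_gen_comm (fun z => hm z x) (fun z => hm z y)
  simp only [mul_left_comm (π _)] at h
  rw [sum_harmonicMeasure_mul hm0 hx fun z hz => by simp [hmh z hz],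
    sum_harmonicMeasure_mul hm0 hy fun z hz => by simp [hmh z hz]] at h
  rwa [gen_harmonicMeasure_of_ne hm0 hx hy hxy, gen_harmonicMeasure_of_ne hm0 hy hx hxy.symm] at h

end Trace

theorem stmt19_general {V : Type*} [Fintype V] [DecidableEq V]
    (R : V → V → ℝ) (π : V → ℝ)
    (hR : ∀ x y, 0 ≤ R x y)
    (hstat : Stationary R π) (hirr : Irred R)
    (W : Finset V) (hWne : W.Nonempty)
    (hm : V → V → ℝ)
    (hm0 : ∀ x ∈ W, ∀ y, hm x y = if x = y then 1 else 0)
    (hmh : ∀ x, x ∉ W → ∀ y, gen R (fun z => hm z y) x = 0)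
    (RW : V → V → ℝ)
    (hRW : ∀ x ∈ W, ∀ y ∈ W, x ≠ y → RW x y = R x y + ∑ z ∈ Wᶜ, R x z * hm z y) :
    (∀ y ∈ W,
      ∑ x ∈ W.erase y, (π x / ∑ z ∈ W, π z) * RW x y
        = (π y / ∑ z ∈ W, π z) * ∑ x ∈ W.erase y, RW y x) ∧
    (Reversible R π → ∀ x ∈ W, ∀ y ∈ W,
      (π x / ∑ z ∈ W, π z) * RW x y = (π y / ∑ z ∈ W, π z) * RW y x) := by
  have hsum := sum_harmonicMeasure_eq_one hR hirr hWne hm0 hmh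
  simp only [div_mul_eq_mul_div, ← sum_div]
  refine ⟨fun y hy => ?_, fun hrev x hx y hy => ?_⟩
  · rw [sum_congr rfl fun x hx => by rw [hRW x (mem_of_mem_erase hx) y hy (ne_of_mem_erase hx)],
      sum_congr rfl fun x hx => hRW y hy x (mem_of_mem_erase hx) (ne_of_mem_erase hx).symm]
    exact congrArg (· / _) (hstat.sum_erase_mul_traceRate hm0 hmh hsum hy)
  · obtain rfl | hxy := eq_or_ne x y
    · rfl
    rw [hRW x hx y hy hxy, hRW y hy x hx hxy.symm]
    exact congrArg (· / _) (hrev.mul_traceRate_comm hm0 hmh hx hy)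

/-- the measure `π` conditioned to `W`, `π_W(x) = π(x)/π(W)`, is the
stationary state of the trace process on `W`, whose jump rates are
`R_W(x,y) = R(x,y) + ∑_{z∉W} R(x,z) P_z[X_{H_W} = y]` (via the harmonic measure `hm`);
and if `X` is reversible with respect to `π`, then the trace is reversible with respect
to `π_W`. -/
theorem stmt19 {V : Type*} [Fintype V] [DecidableEq V]
    (R : V → V → ℝ) (π : V → ℝ)
    (hR : ∀ x y, 0 ≤ R x y) (hRdiag : ∀ x, R x x = 0)
    (hπ : ∀ x, 0 < π x) (hstat : Stationary R π) (hirr : Irred R)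
    (W : Finset V) (hWne : W.Nonempty)
    (hm : V → V → ℝ)
    (hm0 : ∀ x ∈ W, ∀ y, hm x y = if x = y then 1 else 0)
    (hmh : ∀ x, x ∉ W → ∀ y, gen R (fun z => hm z y) x = 0)
    (RW : V → V → ℝ)
    (hRW : ∀ x ∈ W, ∀ y ∈ W, x ≠ y → RW x y = R x y + ∑ z ∈ Wᶜ, R x z * hm z y)
    (hRWdiag : ∀ x, RW x x = 0) :
    (∀ y ∈ W,
      ∑ x ∈ W.erase y, (π x / ∑ z ∈ W, π z) * RW x y
        = (π y / ∑ z ∈ W, π z) * ∑ x ∈ W.erase y, RW y x) ∧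
    (Reversible R π → ∀ x ∈ W, ∀ y ∈ W,
      (π x / ∑ z ∈ W, π z) * RW x y = (π y / ∑ z ∈ W, π z) * RW y x) :=
  stmt19_general R π hR hstat hirr W hWne hm hm0 hmh RW hRW
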